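/- Let K be a simplicial complex on Fin n, d ≥ 1, and σ a symmetry of K. Let F : ℝ → ℝ be an odd function, let f↑ : C_{d+1}(K) → C_{d+1}(K) be the componentwise map with (f↑ x)_t = F(x_t) for all t ∈ X_{d+1}(K), and let f↓ : C_{d−1}(K) → C_{d−1}(K) be the componentwise map with (f↓ y)_e = F(y_e) for all e ∈ X_{d−1}(K). Then S^d_σ commutes with both induced vector fields on C_d(K): (B_{d+1}^K ∘ f↑ ∘ (B_{d+1}^K)ᵀ) ∘ S^d_σ = S^d_σ ∘ (B_{d+1}^K ∘ f↑ ∘ (B_{d+1}^K)ᵀ), and ((B_d^K)ᵀ ∘ f↓ ∘ B_d^K) ∘ S^d_σ = S^d_σ ∘ ((B_d^K)ᵀ ∘ f↓ ∘ B_d^K). -/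
import Mathlib

open Finset

section Aux

/-- Sign of a permutation after removing the point `k ↦ π k`. -/
lemma sign_remove {m : ℕ} (π : Equiv.Perm (Fin (m + 1))) (k : Fin (m + 1))
    (π' : Equiv.Perm (Fin m)) (h : ∀ j, (π k).succAbove (π' j) = π (k.succAbove j)) :
    Equiv.Perm.sign π = Equiv.Perm.sign π' * (-1) ^ ((k : ℕ) + ((π k : Fin (m + 1)) : ℕ)) := by
  have hπ : π = (π k).cycleRange⁻¹ * (Equiv.Perm.decomposeFin.symm (0, π')) * k.cycleRange := by
    ext i
    by_cases hi : i = k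
    · subst hi
      simp only [Equiv.Perm.mul_apply, Fin.cycleRange_self,
        Equiv.Perm.decomposeFin_symm_apply_zero]
      rw [Equiv.Perm.inv_def, Fin.cycleRange_symm_zero]
    · obtain ⟨j, rfl⟩ := Fin.exists_succAbove_eq hi
      simp only [Equiv.Perm.mul_apply, Fin.cycleRange_succAbove,
        Equiv.Perm.decomposeFin_symm_apply_succ, Equiv.swap_self, Equiv.refl_apply]
      rw [Equiv.Perm.inv_def, Fin.cycleRange_symm_succ, h j]
  set p := π k with hp
  rw [hπ]
  simp only [map_mul, Equiv.Perm.sign_inv, Fin.sign_cycleRange,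
    Equiv.Perm.decomposeFin.symm_sign, if_pos rfl, one_mul, pow_add, if_true]
  simp [mul_comm, mul_left_comm]

lemma card_erase' {n m : ℕ} {t : Finset (Fin n)} (h : t.card = m + 1) {a : Fin n}
    (ha : a ∈ t) : (t.erase a).card = m := by
  simp [Finset.card_erase_of_mem ha, h]

/-- Enumerating `t.erase (t_k)` is enumerating `t` composed with `succAbove k`. -/
lemma orderEmbOfFin_erase {n m : ℕ} (t : Finset (Fin n)) (h : t.card = m + 1)
    (k : Fin (m + 1)) (j : Fin m) :
    (t.erase (t.orderEmbOfFin h k)).orderEmbOfFin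
        (card_erase' h (t.orderEmbOfFin_mem h k)) j = t.orderEmbOfFin h (k.succAbove j) := by
  have hu := Finset.orderEmbOfFin_unique
      (f := fun j : Fin m => t.orderEmbOfFin h (k.succAbove j))
      (card_erase' h (t.orderEmbOfFin_mem h k))
      (fun x => Finset.mem_erase.mpr
        ⟨(t.orderEmbOfFin h).injective.ne (k.succAbove_ne x), t.orderEmbOfFin_mem h _⟩)
      ((t.orderEmbOfFin h).strictMono.comp (Fin.strictMono_succAbove k))
  exact (congrFun hu j).symm

end Aux

/-- A simplicial complex on the vertex set `Fin n`: a set of nonempty finsets closed under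
taking nonempty subsets. -/
def IsSimplicialCx {n : ℕ} (𝒦 : Set (Finset (Fin n))) : Prop :=
  (∀ s ∈ 𝒦, s.Nonempty) ∧ ∀ s ∈ 𝒦, ∀ t ⊆ s, t.Nonempty → t ∈ 𝒦

/-- `X_d(𝒦)`: the `d`-simplices of `𝒦`, i.e. the members of `𝒦` of cardinality `d + 1`. -/
abbrev Cell (n d : ℕ) (𝒦 : Set (Finset (Fin n))) : Type :=
  {s : Finset (Fin n) // s ∈ 𝒦 ∧ s.card = d + 1}

noncomputable instance (n d : ℕ) (𝒦 : Set (Finset (Fin n))) : Fintype (Cell n d 𝒦) :=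
  Fintype.ofFinite _

/-- The incidence sign `I_e^t`: equals `(-1)^k` if `e = t.erase i_k` where `i_k` is the
`(k+1)`-st smallest element of `t`, and `0` otherwise. -/
noncomputable def isign {n : ℕ} (t e : Finset (Fin n)) : ℤ :=
  ∑ k : Fin t.card, if e = t.erase (t.orderIsoOfFin rfl k : Fin n) then (-1) ^ (k : ℕ) else 0

/-- The boundary map `B_{d+1} : C_{d+1}(𝒦) → C_d(𝒦)`, `(B x)_e = Σ_t I_e^t x_t`. -/
noncomputable def bMap {n : ℕ} (𝒦 : Set (Finset (Fin n))) (d : ℕ)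
    (x : Cell n (d + 1) 𝒦 → ℝ) : Cell n d 𝒦 → ℝ :=
  fun e => ∑ t : Cell n (d + 1) 𝒦, (isign t.1 e.1 : ℝ) * x t

/-- The transpose (adjoint) boundary map `B_{d+1}ᵀ : C_d(𝒦) → C_{d+1}(𝒦)`,
`(Bᵀ y)_t = Σ_e I_e^t y_e`. -/
noncomputable def bMapT {n : ℕ} (𝒦 : Set (Finset (Fin n))) (d : ℕ)
    (y : Cell n d 𝒦 → ℝ) : Cell n (d + 1) 𝒦 → ℝ :=
  fun t => ∑ e : Cell n d 𝒦, (isign t.1 e.1 : ℝ) * y e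

/-- The permutation of `Fin A.card` induced by a permutation `σ` of `Fin n` on a finset `A`:
`k ↦ e_{A.image σ}⁻¹ (σ (e_A k))`, where `e_A` enumerates `A` in increasing order. -/
noncomputable def relPerm {n : ℕ} (σ : Equiv.Perm (Fin n)) (A : Finset (Fin n)) :
    Equiv.Perm (Fin A.card) :=
  ((A.orderIsoOfFin rfl).toEquiv.trans
      ((σ : Fin n ≃ Fin n).subtypeEquiv (p := (· ∈ A)) (q := (· ∈ A.image ⇑σ))
        (fun a => ⟨fun ha => Finset.mem_image_of_mem σ ha,
          fun h => by
            obtain ⟨a', ha', h'⟩ := Finset.mem_image.mp h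
            rwa [← σ.injective h']⟩))).trans
    ((A.image ⇑σ).orderIsoOfFin
      (Finset.card_image_of_injective A σ.injective)).toEquiv.symm

/-- `sgn(A, σ) ∈ {1, -1}`: the sign of the permutation by which `σ` rearranges the elements
of `A`. -/
noncomputable def sgnA {n : ℕ} (σ : Equiv.Perm (Fin n)) (A : Finset (Fin n)) : ℤ :=
  ((Equiv.Perm.sign (relPerm σ A) : ℤˣ) : ℤ)

/-- `σ` is a symmetry of the complex `𝒦`: it maps `𝒦` onto `𝒦`. -/
def IsSymmetry {n : ℕ} (σ : Equiv.Perm (Fin n)) (𝒦 : Set (Finset (Fin n))) : Prop :=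
  (∀ A ∈ 𝒦, A.image ⇑σ ∈ 𝒦) ∧ Finset.image ⇑σ '' 𝒦 = 𝒦

/-- The signed symmetry map `S^d_σ : C_d(𝒦) → C_d(𝒦)`, the linear map determined by
`(S^d_σ x)_{A.image σ} = sgn(A, σ) · x_A` for all `A ∈ X_d(𝒦)`. -/
noncomputable def Smap {n : ℕ} (σ : Equiv.Perm (Fin n)) (𝒦 : Set (Finset (Fin n))) (d : ℕ)
    (x : Cell n d 𝒦 → ℝ) : Cell n d 𝒦 → ℝ :=
  fun s => ∑ A : Cell n d 𝒦, if s.1 = A.1.image ⇑σ then (sgnA σ A.1 : ℝ) * x A else 0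


section KeyIdentity

lemma emb_congr {n m : ℕ} {s s' : Finset (Fin n)} (h : s = s') (hs : s.card = m) (j : Fin m) :
    s.orderEmbOfFin hs j = s'.orderEmbOfFin (h ▸ hs) j := by subst h; rfl

lemma isign_of_card {n m : ℕ} (t e : Finset (Fin n)) (h : t.card = m + 1) :
    isign t e
      = ∑ k : Fin (m + 1), if e = t.erase (t.orderEmbOfFin h k) then (-1) ^ (k : ℕ) else 0 := by
  rw [isign]
  refine Fintype.sum_equiv (finCongr h) _ _ fun k => ?_
  have h1 : (t.orderIsoOfFin rfl k : Fin n) = t.orderEmbOfFin h (finCongr h k) := by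
    rw [Finset.coe_orderIsoOfFin_apply]
    exact Finset.orderEmbOfFin_eq_orderEmbOfFin_iff.mpr rfl
  rw [h1]
  simp

lemma isign_erase {n m : ℕ} (t : Finset (Fin n)) (h : t.card = m + 1) (k : Fin (m + 1)) :
    isign t (t.erase (t.orderEmbOfFin h k)) = (-1) ^ (k : ℕ) := by
  rw [isign_of_card t _ h, Finset.sum_eq_single k]
  · rw [if_pos rfl]
  · intro b _ hb
    rw [if_neg]
    intro hc
    exact hb ((t.orderEmbOfFin h).injective
      ((Finset.erase_inj t (t.orderEmbOfFin_mem h b)).mp hc.symm))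
  · simp

lemma isign_zero {n m : ℕ} (t e : Finset (Fin n)) (h : t.card = m + 1)
    (he : ∀ k : Fin (m + 1), e ≠ t.erase (t.orderEmbOfFin h k)) : isign t e = 0 := by
  rw [isign_of_card t e h]
  exact Finset.sum_eq_zero fun k _ => if_neg (he k)

lemma relPerm_spec {n : ℕ} (σ : Equiv.Perm (Fin n)) (A : Finset (Fin n)) (k : Fin A.card) :
    (A.image ⇑σ).orderEmbOfFin (Finset.card_image_of_injective A σ.injective) (relPerm σ A k)
      = σ (A.orderEmbOfFin rfl k) := by
  have h1 : ((A.image ⇑σ).orderIsoOfFin (Finset.card_image_of_injective A σ.injective)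
      (relPerm σ A k) : Fin n) = σ ((A.orderIsoOfFin rfl k : A) : Fin n) := by
    simp [relPerm, Equiv.subtypeEquiv]
  simpa [Finset.coe_orderIsoOfFin_apply] using h1

lemma relPerm_spec' {n c : ℕ} (σ : Equiv.Perm (Fin n)) {A : Finset (Fin n)} (hA : A.card = c)
    (k : Fin c) :
    (A.image ⇑σ).orderEmbOfFin
        (by rw [Finset.card_image_of_injective A σ.injective, hA])
        ((finCongr hA).permCongr (relPerm σ A) k) = σ (A.orderEmbOfFin hA k) := by
  have h2 : (A.image ⇑σ).orderEmbOfFin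
        (by rw [Finset.card_image_of_injective A σ.injective, hA])
        ((finCongr hA).permCongr (relPerm σ A) k)
      = (A.image ⇑σ).orderEmbOfFin (Finset.card_image_of_injective A σ.injective)
        (relPerm σ A (finCongr hA.symm k)) := by
    refine Finset.orderEmbOfFin_eq_orderEmbOfFin_iff.mpr ?_
    simp [Equiv.permCongr_apply]
  rw [h2, relPerm_spec]
  congr 1

/-- The key identity: incidence signs are `σ`-equivariant up to `sgnA` factors. -/
lemma isign_image {n m : ℕ} (σ : Equiv.Perm (Fin n)) (t e : Finset (Fin n))
    (ht : t.card = m + 1) :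
    isign (t.image ⇑σ) (e.image ⇑σ) = sgnA σ t * sgnA σ e * isign t e := by
  have htσ : (t.image ⇑σ).card = m + 1 := by
    rw [Finset.card_image_of_injective t σ.injective, ht]
  set π : Equiv.Perm (Fin (m + 1)) := (finCongr ht).permCongr (relPerm σ t) with hπdef
  have hπ : ∀ k, (t.image ⇑σ).orderEmbOfFin htσ (π k) = σ (t.orderEmbOfFin ht k) :=
    fun k => relPerm_spec' σ ht k
  have hsgnt : sgnA σ t = ((Equiv.Perm.sign π : ℤˣ) : ℤ) := by
    rw [hπdef, Equiv.Perm.sign_permCongr]; rfl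
  by_cases hex : ∃ k : Fin (m + 1), e = t.erase (t.orderEmbOfFin ht k)
  · obtain ⟨k, rfl⟩ := hex
    set a := t.orderEmbOfFin ht k with hadef
    have hmem : a ∈ t := t.orderEmbOfFin_mem ht k
    have he : (t.erase a).card = m := card_erase' ht hmem
    have himg : (t.erase a).image ⇑σ
        = (t.image ⇑σ).erase ((t.image ⇑σ).orderEmbOfFin htσ (π k)) := by
      rw [Finset.image_erase σ.injective, hπ k]
    set π' : Equiv.Perm (Fin m) := (finCongr he).permCongr (relPerm σ (t.erase a)) with hπ'def
    have hsgne : sgnA σ (t.erase a) = ((Equiv.Perm.sign π' : ℤˣ) : ℤ) := by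
      rw [hπ'def, Equiv.Perm.sign_permCongr]; rfl
    have hcomm : ∀ j, (π k).succAbove (π' j) = π (k.succAbove j) := by
      intro j
      apply ((t.image ⇑σ).orderEmbOfFin htσ).injective
      calc (t.image ⇑σ).orderEmbOfFin htσ ((π k).succAbove (π' j))
          = ((t.image ⇑σ).erase ((t.image ⇑σ).orderEmbOfFin htσ (π k))).orderEmbOfFin
              (card_erase' htσ ((t.image ⇑σ).orderEmbOfFin_mem htσ (π k))) (π' j) :=
            (orderEmbOfFin_erase (t.image ⇑σ) htσ (π k) (π' j)).symm
        _ = ((t.erase a).image ⇑σ).orderEmbOfFin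
              (by rw [Finset.card_image_of_injective _ σ.injective, he]) (π' j) :=
            (emb_congr himg _ (π' j)).symm
        _ = σ ((t.erase a).orderEmbOfFin he j) := relPerm_spec' σ he j
        _ = σ (t.orderEmbOfFin ht (k.succAbove j)) :=
            congrArg (⇑σ) (orderEmbOfFin_erase t ht k j)
        _ = (t.image ⇑σ).orderEmbOfFin htσ (π (k.succAbove j)) := (hπ _).symm
    have hs := sign_remove π k π' hcomm
    have hZ := congrArg (fun u : ℤˣ => (u : ℤ)) hs
    push_cast at hZ
    rw [himg, isign_erase (t.image ⇑σ) htσ (π k), hadef, isign_erase t ht k, ← hadef,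
      hsgnt, hsgne, hZ, pow_add]
    have hkk : ((-1 : ℤ)) ^ (k : ℕ) * (-1) ^ (k : ℕ) = 1 := by
      rw [← pow_add]; exact Even.neg_one_pow ⟨(k : ℕ), rfl⟩
    have hee : ((Equiv.Perm.sign π' : ℤˣ) : ℤ) * ((Equiv.Perm.sign π' : ℤˣ) : ℤ) = 1 := by
      rw [← Units.val_mul, Int.units_mul_self, Units.val_one]
    have hr : ((Equiv.Perm.sign π' : ℤˣ) : ℤ) * ((-1 : ℤ) ^ (k : ℕ) * (-1) ^ ((π k : Fin (m+1)) : ℕ))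
          * ((Equiv.Perm.sign π' : ℤˣ) : ℤ) * (-1) ^ (k : ℕ)
        = (((Equiv.Perm.sign π' : ℤˣ) : ℤ) * ((Equiv.Perm.sign π' : ℤˣ) : ℤ))
          * ((-1 : ℤ) ^ (k : ℕ) * (-1) ^ (k : ℕ)) * (-1) ^ ((π k : Fin (m+1)) : ℕ) := by ring
    rw [hr, hee, hkk, one_mul, one_mul]
  · push_neg at hex
    rw [isign_zero t e ht hex, isign_zero (t.image ⇑σ) (e.image ⇑σ) htσ, mul_zero]
    intro k' hc
    apply hex (π.symm k')
    have hb : (t.image ⇑σ).orderEmbOfFin htσ k' = σ (t.orderEmbOfFin ht (π.symm k')) := by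
      rw [← hπ (π.symm k'), Equiv.apply_symm_apply]
    apply Finset.image_injective σ.injective
    rw [hc, hb, ← Finset.image_erase σ.injective]

end KeyIdentity

section CellLevel

variable {n : ℕ} {𝒦 : Set (Finset (Fin n))}

/-- The cell map induced by a symmetry. -/
def cMap (σ : Equiv.Perm (Fin n)) (hσ : IsSymmetry σ 𝒦) (d : ℕ) :
    Cell n d 𝒦 → Cell n d 𝒦 :=
  fun A => ⟨A.1.image ⇑σ, hσ.1 _ A.2.1,
    by rw [Finset.card_image_of_injective _ σ.injective, A.2.2]⟩

lemma cMap_bij (σ : Equiv.Perm (Fin n)) (hσ : IsSymmetry σ 𝒦) (d : ℕ) :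
    Function.Bijective (cMap σ hσ d) := by
  constructor
  · intro A B h
    exact Subtype.ext (Finset.image_injective σ.injective (congrArg Subtype.val h))
  · intro B
    have hmem : B.1 ∈ Finset.image ⇑σ '' 𝒦 := by rw [hσ.2]; exact B.2.1
    obtain ⟨A, hA, hAB⟩ := hmem
    have hcard : A.card = d + 1 := by
      have h1 : (A.image ⇑σ).card = B.1.card := by rw [hAB]
      rw [Finset.card_image_of_injective _ σ.injective] at h1
      rw [h1, B.2.2]
    exact ⟨⟨A, hA, hcard⟩, Subtype.ext hAB⟩

lemma Smap_cMap (σ : Equiv.Perm (Fin n)) (hσ : IsSymmetry σ 𝒦) (d : ℕ)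
    (x : Cell n d 𝒦 → ℝ) (A : Cell n d 𝒦) :
    Smap σ 𝒦 d x (cMap σ hσ d A) = (sgnA σ A.1 : ℝ) * x A := by
  rw [Smap, Finset.sum_eq_single A]
  · have h0 : (cMap σ hσ d A).1 = A.1.image ⇑σ := rfl
    rw [if_pos h0]
  · intro B _ hBA
    rw [if_neg]
    intro hc
    exact hBA (Subtype.ext (Finset.image_injective σ.injective hc.symm))
  · simp

lemma sgn_sq (σ : Equiv.Perm (Fin n)) (A : Finset (Fin n)) :
    (sgnA σ A : ℝ) * (sgnA σ A : ℝ) = 1 := by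
  rcases Int.units_eq_one_or (Equiv.Perm.sign (relPerm σ A)) with h | h <;>
    simp [sgnA, h]

lemma F_sgn (σ : Equiv.Perm (Fin n)) (A : Finset (Fin n)) {F : ℝ → ℝ}
    (hF : ∀ r : ℝ, F (-r) = -F r) (r : ℝ) :
    F ((sgnA σ A : ℝ) * r) = (sgnA σ A : ℝ) * F r := by
  rcases Int.units_eq_one_or (Equiv.Perm.sign (relPerm σ A)) with h | h <;>
    simp [sgnA, h, hF]

lemma bMapT_Smap (σ : Equiv.Perm (Fin n)) (hσ : IsSymmetry σ 𝒦) (d : ℕ)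
    (y : Cell n d 𝒦 → ℝ) (t : Cell n (d + 1) 𝒦) :
    bMapT 𝒦 d (Smap σ 𝒦 d y) (cMap σ hσ (d + 1) t)
      = (sgnA σ t.1 : ℝ) * bMapT 𝒦 d y t := by
  have h1 : bMapT 𝒦 d (Smap σ 𝒦 d y) (cMap σ hσ (d + 1) t)
      = ∑ v : Cell n d 𝒦, (isign (t.1.image ⇑σ) (v.1.image ⇑σ) : ℝ)
          * Smap σ 𝒦 d y (cMap σ hσ d v) :=
    (Function.Bijective.sum_comp (cMap_bij σ hσ d) _).symm
  rw [h1, bMapT, Finset.mul_sum]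
  refine Finset.sum_congr rfl fun v _ => ?_
  rw [Smap_cMap]
  have hk := isign_image σ t.1 v.1 (m := d + 1) t.2.2
  have hv2 := sgn_sq σ v.1
  push_cast [hk]
  linear_combination ((isign t.1 v.1 : ℝ) * (sgnA σ t.1 : ℝ) * y v) * hv2

lemma bMap_Smap (σ : Equiv.Perm (Fin n)) (hσ : IsSymmetry σ 𝒦) (d : ℕ)
    (x : Cell n (d + 1) 𝒦 → ℝ) (s : Cell n d 𝒦) :
    bMap 𝒦 d (Smap σ 𝒦 (d + 1) x) (cMap σ hσ d s)
      = (sgnA σ s.1 : ℝ) * bMap 𝒦 d x s := by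
  have h1 : bMap 𝒦 d (Smap σ 𝒦 (d + 1) x) (cMap σ hσ d s)
      = ∑ u : Cell n (d + 1) 𝒦, (isign (u.1.image ⇑σ) (s.1.image ⇑σ) : ℝ)
          * Smap σ 𝒦 (d + 1) x (cMap σ hσ (d + 1) u) :=
    (Function.Bijective.sum_comp (cMap_bij σ hσ (d + 1)) _).symm
  rw [h1, bMap, Finset.mul_sum]
  refine Finset.sum_congr rfl fun u _ => ?_
  rw [Smap_cMap]
  have hk := isign_image σ u.1 s.1 (m := d + 1) u.2.2
  have hu2 := sgn_sq σ u.1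
  push_cast [hk]
  linear_combination ((isign u.1 s.1 : ℝ) * (sgnA σ s.1 : ℝ) * x u) * hu2

end CellLevel

/-- **Symmetries of the complex are symmetries of the dynamics.**  For a symmetry `σ` of `𝒦`,
an odd function `F : ℝ → ℝ`, and `d = e + 1 ≥ 1`, the map `S^d_σ` commutes with both vector
fields `B_{d+1} ∘ f↑ ∘ B_{d+1}ᵀ` and `B_dᵀ ∘ f↓ ∘ B_d` on `C_d(𝒦)`, where `f↑` and `f↓` apply
`F` componentwise. -/
theorem Smap_commutes_with_dynamics {n : ℕ} (𝒦 : Set (Finset (Fin n)))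
    (hK : IsSimplicialCx 𝒦) (σ : Equiv.Perm (Fin n)) (hσ : IsSymmetry σ 𝒦) (e : ℕ)
    (F : ℝ → ℝ) (hF : ∀ r : ℝ, F (-r) = -F r) :
    (∀ x : Cell n (e + 1) 𝒦 → ℝ,
      bMap 𝒦 (e + 1) (fun t => F (bMapT 𝒦 (e + 1) (Smap σ 𝒦 (e + 1) x) t)) =
        Smap σ 𝒦 (e + 1) (bMap 𝒦 (e + 1) (fun t => F (bMapT 𝒦 (e + 1) x t)))) ∧
    (∀ x : Cell n (e + 1) 𝒦 → ℝ,
      bMapT 𝒦 e (fun s => F (bMap 𝒦 e (Smap σ 𝒦 (e + 1) x) s)) =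
        Smap σ 𝒦 (e + 1) (bMapT 𝒦 e (fun s => F (bMap 𝒦 e x s)))) := by
  constructor
  · intro x
    funext s
    obtain ⟨s₀, rfl⟩ := (cMap_bij σ hσ (e + 1)).2 s
    have hfun : (fun t => F (bMapT 𝒦 (e + 1) (Smap σ 𝒦 (e + 1) x) t))
        = Smap σ 𝒦 (e + 2) (fun t => F (bMapT 𝒦 (e + 1) x t)) := by
      funext t
      obtain ⟨u, rfl⟩ := (cMap_bij σ hσ (e + 2)).2 t
      rw [bMapT_Smap σ hσ (e + 1) x u, F_sgn σ u.1 hF, Smap_cMap]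
    rw [hfun, bMap_Smap σ hσ (e + 1) _ s₀, Smap_cMap]
  · intro x
    funext t
    obtain ⟨t₀, rfl⟩ := (cMap_bij σ hσ (e + 1)).2 t
    have hfun : (fun s => F (bMap 𝒦 e (Smap σ 𝒦 (e + 1) x) s))
        = Smap σ 𝒦 e (fun s => F (bMap 𝒦 e x s)) := by
      funext s
      obtain ⟨v, rfl⟩ := (cMap_bij σ hσ e).2 s
      rw [bMap_Smap σ hσ e x v, F_sgn σ v.1 hF, Smap_cMap]
    rw [hfun, bMapT_Smap σ hσ e _ t₀, Smap_cMap]
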